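/- arXiv:2308.09994 — 2 statements merged into one kernel-verified Lean document; each statement's English description precedes it below -/
import Mathlib

section
/- Let A be positive semi-definite of rank r ≤ n with eigenvalues λ₁ ≥ ⋯ ≥ λ_r > 0 = λ_{r+1} = ⋯ = λ_n, and suppose A+E is also positive semi-definite with E Hermitian. Set k = ‖(A^{1/2})⁺ E (A^{1/2})⁺‖₂ (no restriction k ≤ 1). Then for every i ∈ {1,…,r}: λ_{n-r+i}(A+E) ≤ (1+k)λ_i and λ_i(A+E) ≥ (1−k)λ_i, with eigenvalues of A+E in decreasing order. -/
open Matrix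
open scoped ComplexOrder

/-- The spectral norm (operator 2-norm) of a complex matrix. -/
noncomputable def specNorm {m n : Type*} [Fintype m] [Fintype n] [DecidableEq n]
    (A : Matrix m n ℂ) : ℝ :=
  ‖LinearMap.toContinuousLinearMap (Matrix.toEuclideanLin A)‖

/-- `B` is the Moore–Penrose pseudoinverse of `A` (the four Penrose conditions). -/
def IsMP {m n : Type*} [Fintype m] [Fintype n]
    (A : Matrix m n ℂ) (B : Matrix n m ℂ) : Prop :=
  A * B * A = A ∧ B * A * B = B ∧ (A * B)ᴴ = A * B ∧ (B * A)ᴴ = B * A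



lemma specNorm_nonneg {n : Type*} [Fintype n] [DecidableEq n] (K : Matrix n n ℂ) :
    0 ≤ specNorm K := norm_nonneg _

lemma quad_le_specNorm {n : Type*} [Fintype n] [DecidableEq n]
    (K : Matrix n n ℂ) (y : n → ℂ) :
    ‖star y ⬝ᵥ (K *ᵥ y)‖ ≤ specNorm K * (∑ j, ‖y j‖^2) := by
  set y' : EuclideanSpace ℂ n := (WithLp.equiv 2 (n → ℂ)).symm y with hy'
  set L := LinearMap.toContinuousLinearMap (Matrix.toEuclideanLin K) with hL
  have h1 : (star y ⬝ᵥ (K *ᵥ y)) = inner ℂ y' (L y') := by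
    rw [hL, hy']
    rw [show (LinearMap.toContinuousLinearMap (Matrix.toEuclideanLin K))
        ((WithLp.equiv 2 (n → ℂ)).symm y) = (WithLp.equiv 2 (n → ℂ)).symm (K *ᵥ y) from rfl]
    rw [WithLp.equiv_symm_apply, EuclideanSpace.inner_toLp_toLp, dotProduct_comm]
  have h2 : ‖y'‖^2 = ∑ j, ‖y j‖^2 := by
    rw [EuclideanSpace.norm_eq, Real.sq_sqrt (by positivity)]
    rfl
  rw [h1, ← h2]
  calc ‖inner ℂ y' (L y')‖ = ‖(inner ℂ y' (L y') : ℂ)‖ := rfl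
    _ ≤ ‖y'‖ * ‖L y'‖ := norm_inner_le_norm (𝕜 := ℂ) y' _
    _ ≤ ‖y'‖ * (specNorm K * ‖y'‖) := by
        gcongr
        exact ContinuousLinearMap.le_opNorm _ _
    _ = specNorm K * ‖y'‖^2 := by ring

variable {n : ℕ}

lemma unit_hV {V : Matrix (Fin n) (Fin n) ℂ} (hV : V ∈ Matrix.unitaryGroup (Fin n) ℂ) :
    Vᴴ * V = 1 := by
  have := hV.1
  rwa [Matrix.star_eq_conjTranspose] at this

lemma unit_hV' {V : Matrix (Fin n) (Fin n) ℂ} (hV : V ∈ Matrix.unitaryGroup (Fin n) ℂ) :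
    V * Vᴴ = 1 := by
  have := hV.2
  rwa [Matrix.star_eq_conjTranspose] at this

lemma quad_diag {V : Matrix (Fin n) (Fin n) ℂ} (hV : V ∈ Matrix.unitaryGroup (Fin n) ℂ)
    (lam : Fin n → ℝ) (c : Fin n → ℂ) :
    star (V *ᵥ c) ⬝ᵥ ((V * Matrix.diagonal (fun j => (lam j : ℂ)) * Vᴴ) *ᵥ (V *ᵥ c))
      = ((∑ j, lam j * ‖c j‖^2 : ℝ) : ℂ) := by
  have h1 : (V * Matrix.diagonal (fun j => (lam j : ℂ)) * Vᴴ) *ᵥ (V *ᵥ c)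
      = V *ᵥ (Matrix.diagonal (fun j => (lam j : ℂ)) *ᵥ c) := by
    rw [Matrix.mulVec_mulVec, Matrix.mul_assoc, Matrix.mul_assoc, unit_hV hV, Matrix.mul_one,
      ← Matrix.mulVec_mulVec]
  rw [h1, Matrix.star_mulVec, Matrix.dotProduct_mulVec, Matrix.vecMul_vecMul,
    ← Matrix.dotProduct_mulVec, Matrix.mulVec_mulVec, unit_hV hV, Matrix.one_mul]
  rw [dotProduct, Complex.ofReal_sum]
  refine Finset.sum_congr rfl fun j _ => ?_
  simp only [Pi.star_apply, Matrix.mulVec_diagonal, Complex.ofReal_mul, RCLike.star_def]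
  rw [show ‖c j‖^2 = Complex.normSq (c j) by rw [← Complex.sq_norm]]
  rw [Complex.normSq_eq_conj_mul_self]
  ring

lemma norm_diag {V : Matrix (Fin n) (Fin n) ℂ} (hV : V ∈ Matrix.unitaryGroup (Fin n) ℂ)
    (c : Fin n → ℂ) :
    star (V *ᵥ c) ⬝ᵥ (V *ᵥ c) = ((∑ j, ‖c j‖^2 : ℝ) : ℂ) := by
  have h := quad_diag hV (fun _ => 1) c
  simp only [Complex.ofReal_one, Matrix.diagonal_one, Matrix.mul_one, unit_hV' hV,
    Matrix.one_mulVec, one_mul] at h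
  exact h

lemma mulVec_inj {V : Matrix (Fin n) (Fin n) ℂ} (hV : V ∈ Matrix.unitaryGroup (Fin n) ℂ)
    {c : Fin n → ℂ} (h : V *ᵥ c = 0) : c = 0 := by
  have : Vᴴ *ᵥ (V *ᵥ c) = 0 := by rw [h, Matrix.mulVec_zero]
  rwa [Matrix.mulVec_mulVec, unit_hV hV, Matrix.one_mulVec] at this

lemma mp_unique {S B1 B2 : Matrix (Fin n) (Fin n) ℂ}
    (h1 : S * B1 * S = S ∧ B1 * S * B1 = B1 ∧ (S * B1)ᴴ = S * B1 ∧ (B1 * S)ᴴ = B1 * S)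
    (h2 : S * B2 * S = S ∧ B2 * S * B2 = B2 ∧ (S * B2)ᴴ = S * B2 ∧ (B2 * S)ᴴ = B2 * S) :
    B1 = B2 := by
  obtain ⟨a1, b1, c1, d1⟩ := h1
  obtain ⟨a2, b2, c2, d2⟩ := h2
  have hSB : S * B1 = S * B2 := by
    calc S * B1 = (S * B1)ᴴ := c1.symm
      _ = B1ᴴ * Sᴴ := by rw [Matrix.conjTranspose_mul]
      _ = B1ᴴ * (S * B2 * S)ᴴ := by rw [a2]
      _ = B1ᴴ * (Sᴴ * (S * B2)ᴴ) := by rw [Matrix.conjTranspose_mul]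
      _ = (B1ᴴ * Sᴴ) * (S * B2) := by rw [c2, Matrix.mul_assoc]
      _ = (S * B1)ᴴ * (S * B2) := by rw [Matrix.conjTranspose_mul]
      _ = (S * B1) * (S * B2) := by rw [c1]
      _ = (S * B1 * S) * B2 := by rw [Matrix.mul_assoc, Matrix.mul_assoc, Matrix.mul_assoc]
      _ = S * B2 := by rw [a1]
  have hBS : B1 * S = B2 * S := by
    calc B1 * S = (B1 * S)ᴴ := d1.symm
      _ = Sᴴ * B1ᴴ := by rw [Matrix.conjTranspose_mul]
      _ = (S * B2 * S)ᴴ * B1ᴴ := by rw [a2]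
      _ = ((B2 * S)ᴴ * Sᴴ) * B1ᴴ := by
          rw [show S * B2 * S = S * (B2 * S) by rw [Matrix.mul_assoc],
            Matrix.conjTranspose_mul]
      _ = (B2 * S) * (Sᴴ * B1ᴴ) := by rw [d2, Matrix.mul_assoc]
      _ = (B2 * S) * (B1 * S)ᴴ := by rw [Matrix.conjTranspose_mul]
      _ = (B2 * S) * (B1 * S) := by rw [d1]
      _ = B2 * (S * B1 * S) := by simp only [Matrix.mul_assoc]
      _ = B2 * S := by rw [a1]
  calc B1 = B1 * S * B1 := b1.symm
    _ = B2 * S * B1 := by rw [hBS]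
    _ = B2 * (S * B1) := by rw [Matrix.mul_assoc]
    _ = B2 * (S * B2) := by rw [hSB]
    _ = B2 := by rw [← Matrix.mul_assoc, b2]

lemma sum_single_eq (g : Fin n → ℂ) : ∑ j, g j • (Pi.single j 1 : Fin n → ℂ) = g := by
  funext i
  simp [Finset.sum_apply, Pi.single_apply]

lemma mulVec_sum_single {V : Matrix (Fin n) (Fin n) ℂ} (g : Fin n → ℂ) :
    ∑ j, g j • (V *ᵥ Pi.single j 1) = V *ᵥ g := by
  have h := map_sum V.mulVecLin (fun j => g j • (Pi.single j 1 : Fin n → ℂ)) Finset.univ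
  simp only [_root_.map_smul, Matrix.mulVecLin_apply] at h
  rw [← h, sum_single_eq]

lemma colV_li {V : Matrix (Fin n) (Fin n) ℂ} (hV : V ∈ Matrix.unitaryGroup (Fin n) ℂ) :
    LinearIndependent ℂ (fun j : Fin n => V *ᵥ Pi.single j 1) := by
  rw [Fintype.linearIndependent_iff]
  intro g hg
  rw [mulVec_sum_single] at hg
  exact fun i => congrFun (mulVec_inj hV hg) i

lemma repr_of_mem_span {V : Matrix (Fin n) (Fin n) ℂ} {S : Finset (Fin n)} {x : Fin n → ℂ}
    (hx : x ∈ Submodule.span ℂ (Set.range (fun j : S => V *ᵥ Pi.single (j : Fin n) 1))) :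
    ∃ c : Fin n → ℂ, (∀ j ∉ S, c j = 0) ∧ V *ᵥ c = x := by
  rw [Submodule.mem_span_range_iff_exists_fun] at hx
  obtain ⟨a, ha⟩ := hx
  refine ⟨∑ j : S, a j • (Pi.single (j : Fin n) 1 : Fin n → ℂ), ?_, ?_⟩
  · intro j hj
    rw [Finset.sum_apply]
    refine Finset.sum_eq_zero fun p _ => ?_
    have hne : (p : Fin n) ≠ j := fun h => hj (h ▸ p.2)
    simp [Pi.single_apply, hne]
  · rw [← ha]
    have h := map_sum V.mulVecLin (fun j : S => a j • (Pi.single (j : Fin n) 1 : Fin n → ℂ))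
      Finset.univ
    simp only [_root_.map_smul, Matrix.mulVecLin_apply] at h
    exact h

lemma inter_exists {V W : Matrix (Fin n) (Fin n) ℂ}
    (hV : V ∈ Matrix.unitaryGroup (Fin n) ℂ) (hW : W ∈ Matrix.unitaryGroup (Fin n) ℂ)
    (S T : Finset (Fin n)) (hcard : n < S.card + T.card) :
    ∃ c d : Fin n → ℂ, (∀ j ∉ S, c j = 0) ∧ (∀ j ∉ T, d j = 0) ∧
      V *ᵥ c = W *ᵥ d ∧ V *ᵥ c ≠ 0 := by
  set U1 := Submodule.span ℂ (Set.range (fun j : S => V *ᵥ Pi.single (j : Fin n) 1)) with hU1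
  set U2 := Submodule.span ℂ (Set.range (fun j : T => W *ᵥ Pi.single (j : Fin n) 1)) with hU2
  have li1 : LinearIndependent ℂ (fun j : S => V *ᵥ Pi.single (j : Fin n) 1) :=
    (colV_li hV).comp _ Subtype.val_injective
  have li2 : LinearIndependent ℂ (fun j : T => W *ᵥ Pi.single (j : Fin n) 1) :=
    (colV_li hW).comp _ Subtype.val_injective
  have d1 : Module.finrank ℂ U1 = S.card := by
    rw [hU1, finrank_span_eq_card li1, Fintype.card_coe]
  have d2 : Module.finrank ℂ U2 = T.card := by
    rw [hU2, finrank_span_eq_card li2, Fintype.card_coe]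
  have hne : U1 ⊓ U2 ≠ ⊥ := by
    intro hbot
    have hsum := Submodule.finrank_sup_add_finrank_inf_eq U1 U2
    rw [hbot, finrank_bot, add_zero, d1, d2] at hsum
    have hle : Module.finrank ℂ ↥(U1 ⊔ U2) ≤ n := by
      have := Submodule.finrank_le (U1 ⊔ U2)
      simpa [Module.finrank_pi] using this
    omega
  obtain ⟨x, hxmem, hxne⟩ := Submodule.ne_bot_iff _ |>.1 hne
  obtain ⟨c, hc, hcx⟩ := repr_of_mem_span (hxmem.1 : x ∈ U1)
  obtain ⟨d, hd, hdx⟩ := repr_of_mem_span (hxmem.2 : x ∈ U2)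
  exact ⟨c, d, hc, hd, by rw [hcx, hdx], by rw [hcx]; exact hxne⟩

lemma mulVDV {V : Matrix (Fin n) (Fin n) ℂ} (hV : V ∈ Matrix.unitaryGroup (Fin n) ℂ)
    (f h : Fin n → ℝ) :
    (V * Matrix.diagonal (fun j => (f j : ℂ)) * Vᴴ) * (V * Matrix.diagonal (fun j => (h j : ℂ)) * Vᴴ)
      = V * Matrix.diagonal (fun j => ((f j * h j : ℝ) : ℂ)) * Vᴴ := by
  have h1 : (V * Matrix.diagonal (fun j => (f j : ℂ)) * Vᴴ) * (V * Matrix.diagonal (fun j => (h j : ℂ)) * Vᴴ)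
      = V * (Matrix.diagonal (fun j => (f j : ℂ)) * Matrix.diagonal (fun j => (h j : ℂ))) * Vᴴ := by
    rw [Matrix.mul_assoc (V * Matrix.diagonal (fun j => (f j : ℂ))) Vᴴ]
    rw [← Matrix.mul_assoc Vᴴ, ← Matrix.mul_assoc Vᴴ, unit_hV hV, Matrix.one_mul]
    rw [← Matrix.mul_assoc, ← Matrix.mul_assoc]
  rw [h1, Matrix.diagonal_mul_diagonal]
  congr 1
  congr 1
  funext j
  push_cast
  ring

lemma hermVDV {V : Matrix (Fin n) (Fin n) ℂ} (f : Fin n → ℝ) :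
    (V * Matrix.diagonal (fun j => (f j : ℂ)) * Vᴴ)ᴴ
      = V * Matrix.diagonal (fun j => (f j : ℂ)) * Vᴴ := by
  rw [Matrix.conjTranspose_mul, Matrix.conjTranspose_mul, Matrix.conjTranspose_conjTranspose,
    Matrix.diagonal_conjTranspose]
  rw [show star (fun j => ((f j : ℝ) : ℂ)) = fun j => ((f j : ℝ) : ℂ) by
    funext j; simp [Complex.conj_ofReal]]
  rw [Matrix.mul_assoc]

lemma dot_self_eq (y : Fin n → ℂ) : star y ⬝ᵥ y = ((∑ j, ‖y j‖^2 : ℝ) : ℂ) := by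
  rw [dotProduct, Complex.ofReal_sum]
  refine Finset.sum_congr rfl fun j _ => ?_
  simp only [Pi.star_apply, RCLike.star_def]
  rw [show ‖y j‖^2 = Complex.normSq (y j) by rw [← Complex.sq_norm]]
  rw [Complex.normSq_eq_conj_mul_self]


/-- Corollary 2.1.1.  `A` positive semi-definite of rank `r`,
`A + E` positive semi-definite, `E` Hermitian, `k = ‖(A^{1/2})⁺ E (A^{1/2})⁺‖₂`
(no restriction `k ≤ 1`).  Then `λ_{n-r+i}(A+E) ≤ (1+k)λ_i` and
`λ_i(A+E) ≥ (1-k)λ_i` for `i < r`. -/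
theorem stmt2 (n r : ℕ) (hr : r ≤ n)
    (A E V W B : Matrix (Fin n) (Fin n) ℂ)
    (hA : A.PosSemidef) (hE : E.IsHermitian) (hAE : (A + E).PosSemidef)
    (lam mu : Fin n → ℝ)
    (hV : V ∈ Matrix.unitaryGroup (Fin n) ℂ)
    (hAeig : A = V * Matrix.diagonal (fun i => (lam i : ℂ)) * Vᴴ)
    (hord : ∀ i j : Fin n, i ≤ j → (j : ℕ) < r → lam j ≤ lam i)
    (hpos : ∀ i : Fin n, (i : ℕ) < r → 0 < lam i)
    (hzero : ∀ i : Fin n, r ≤ (i : ℕ) → lam i = 0)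
    (hB : IsMP (V * Matrix.diagonal (fun i => ((Real.sqrt (lam i) : ℝ) : ℂ)) * Vᴴ) B)
    (hW : W ∈ Matrix.unitaryGroup (Fin n) ℂ)
    (hAEeig : A + E = W * Matrix.diagonal (fun i => (mu i : ℂ)) * Wᴴ)
    (hmu : Antitone mu) :
    ∀ i : Fin n, ∀ hi : (i : ℕ) < r,
      mu ⟨n - r + (i : ℕ), by omega⟩ ≤ (1 + specNorm (B * E * B)) * lam i ∧
      mu i ≥ (1 - specNorm (B * E * B)) * lam i := by
  have lamnn : ∀ j : Fin n, 0 ≤ lam j := by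
    intro j; rcases lt_or_ge (j:ℕ) r with h|h
    · exact (hpos j h).le
    · rw [hzero j h]
  set g : Fin n → ℝ := fun j => if (j:ℕ) < r then (Real.sqrt (lam j))⁻¹ else 0 with hg
  set B0 : Matrix (Fin n) (Fin n) ℂ := V * Matrix.diagonal (fun j => (g j : ℂ)) * Vᴴ with hB0
  have hMP0 : IsMP (V * Matrix.diagonal (fun i => ((Real.sqrt (lam i) : ℝ) : ℂ)) * Vᴴ) B0 := by
    refine ⟨?_, ?_, ?_, ?_⟩
    · rw [hB0, mulVDV hV, mulVDV hV]
      have hfun : (fun j => ((Real.sqrt (lam j) * g j * Real.sqrt (lam j) : ℝ) : ℂ))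
          = fun i => ((Real.sqrt (lam i) : ℝ) : ℂ) := by
        funext j
        rw [Complex.ofReal_inj]
        rcases lt_or_ge (j:ℕ) r with h|h
        · have hs : Real.sqrt (lam j) ≠ 0 := ne_of_gt (Real.sqrt_pos.2 (hpos j h))
          simp only [hg, if_pos h]
          field_simp
        · simp [hg, not_lt.2 h, hzero j h]
      rw [hfun]
    · rw [hB0, mulVDV hV, mulVDV hV]
      have hfun : (fun j => ((g j * Real.sqrt (lam j) * g j : ℝ) : ℂ))
          = fun j => ((g j : ℝ) : ℂ) := by
        funext j
        rw [Complex.ofReal_inj]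
        rcases lt_or_ge (j:ℕ) r with h|h
        · have hs : Real.sqrt (lam j) ≠ 0 := ne_of_gt (Real.sqrt_pos.2 (hpos j h))
          simp only [hg, if_pos h]
          field_simp
        · simp [hg, not_lt.2 h]
      rw [hfun]
    · rw [hB0, mulVDV hV]; exact hermVDV _
    · rw [hB0, mulVDV hV]; exact hermVDV _
  have hBB0 : B = B0 := mp_unique hB hMP0
  rw [hBB0]
  set k := specNorm (B0 * E * B0) with hk
  have hk0 : 0 ≤ k := specNorm_nonneg _
  have hB0herm : B0ᴴ = B0 := hermVDV _
  have Ebound : ∀ c : Fin n → ℂ, (∀ j : Fin n, r ≤ (j:ℕ) → c j = 0) →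
      ‖star (V *ᵥ c) ⬝ᵥ (E *ᵥ (V *ᵥ c))‖ ≤ k * ∑ j, lam j * ‖c j‖^2 := by
    intro c hcsupp
    set c' : Fin n → ℂ := fun j => ((Real.sqrt (lam j) : ℝ) : ℂ) * c j with hc'
    have hB0y : B0 *ᵥ (V *ᵥ c') = V *ᵥ c := by
      rw [hB0, Matrix.mulVec_mulVec]
      rw [Matrix.mul_assoc (V * Matrix.diagonal (fun j => (g j : ℂ))) Vᴴ V, unit_hV hV,
        Matrix.mul_one, ← Matrix.mulVec_mulVec]
      have hdg : (Matrix.diagonal (fun j => (g j : ℂ))) *ᵥ c' = c := by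
        funext j
        rw [Matrix.mulVec_diagonal]
        rcases lt_or_ge (j:ℕ) r with h|h
        · have hs : Real.sqrt (lam j) ≠ 0 := ne_of_gt (Real.sqrt_pos.2 (hpos j h))
          simp only [hc', hg, if_pos h]
          rw [← mul_assoc, ← Complex.ofReal_mul, inv_mul_cancel₀ hs, Complex.ofReal_one, one_mul]
        · simp [hc', hcsupp j h]
      rw [hdg]
    have key : star (V *ᵥ c) ⬝ᵥ (E *ᵥ (V *ᵥ c))
        = star (V *ᵥ c') ⬝ᵥ ((B0 * E * B0) *ᵥ (V *ᵥ c')) := by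
      have h3 : (B0 * E * B0) *ᵥ (V *ᵥ c') = B0 *ᵥ (E *ᵥ (V *ᵥ c)) := by
        rw [← hB0y]
        simp [Matrix.mulVec_mulVec, Matrix.mul_assoc]
      have hstar : star (V *ᵥ c') ᵥ* B0 = star (V *ᵥ c) := by
        have : star (V *ᵥ c) = star (V *ᵥ c') ᵥ* B0 := by
          calc star (V *ᵥ c) = star (B0 *ᵥ (V *ᵥ c')) := by rw [hB0y]
            _ = star (V *ᵥ c') ᵥ* B0ᴴ := Matrix.star_mulVec _ _
            _ = star (V *ᵥ c') ᵥ* B0 := by rw [hB0herm]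
        exact this.symm
      rw [h3, show star (V *ᵥ c') ⬝ᵥ (B0 *ᵥ (E *ᵥ (V *ᵥ c)))
          = (star (V *ᵥ c') ᵥ* B0) ⬝ᵥ (E *ᵥ (V *ᵥ c)) from Matrix.dotProduct_mulVec _ _ _,
        hstar]
    rw [key]
    have hnorm : (∑ j, ‖(V *ᵥ c') j‖^2) = ∑ j, ‖c' j‖^2 := by
      have h4 := (dot_self_eq (V *ᵥ c')).symm.trans (norm_diag hV c')
      exact_mod_cast h4
    have hc'sum : (∑ j, ‖c' j‖^2) = ∑ j, lam j * ‖c j‖^2 := by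
      refine Finset.sum_congr rfl fun j _ => ?_
      simp only [hc']
      rw [norm_mul, Complex.norm_real, Real.norm_eq_abs, abs_of_nonneg (Real.sqrt_nonneg _),
        mul_pow, Real.sq_sqrt (lamnn j)]
    calc ‖star (V *ᵥ c') ⬝ᵥ ((B0 * E * B0) *ᵥ (V *ᵥ c'))‖
        ≤ specNorm (B0 * E * B0) * ∑ j, ‖(V *ᵥ c') j‖^2 := quad_le_specNorm _ _
      _ = k * ∑ j, lam j * ‖c j‖^2 := by rw [hnorm, hc'sum]
  have reQV : ∀ c : Fin n → ℂ, (star (V *ᵥ c) ⬝ᵥ ((A+E) *ᵥ (V *ᵥ c))).re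
      = (∑ j, lam j * ‖c j‖^2) + (star (V *ᵥ c) ⬝ᵥ (E *ᵥ (V *ᵥ c))).re := by
    intro c
    rw [Matrix.add_mulVec, dotProduct_add, Complex.add_re]
    congr 1
    rw [hAeig, quad_diag hV lam c, Complex.ofReal_re]
  have reQW : ∀ d : Fin n → ℂ, (star (W *ᵥ d) ⬝ᵥ ((A+E) *ᵥ (W *ᵥ d))).re
      = ∑ j, mu j * ‖d j‖^2 := by
    intro d
    rw [hAEeig, quad_diag hW mu d, Complex.ofReal_re]
  have normVW : ∀ c d : Fin n → ℂ, V *ᵥ c = W *ᵥ d → (∑ j, ‖c j‖^2) = ∑ j, ‖d j‖^2 := by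
    intro c d hcd
    have h1 := norm_diag hV c
    rw [hcd] at h1
    have h2 := norm_diag hW d
    exact_mod_cast h1.symm.trans h2
  intro i hi
  have hin : (i:ℕ) < n := lt_of_lt_of_le hi hr
  have hqnn : ∀ c : Fin n → ℂ, 0 ≤ ∑ j, lam j * ‖c j‖^2 := fun c =>
    Finset.sum_nonneg fun j _ => mul_nonneg (lamnn j) (by positivity)
  constructor
  · -- upper bound
    have hb1 : ∀ m ∈ Finset.Ico (i:ℕ) r, m < n := fun m hm =>
      lt_of_lt_of_le (Finset.mem_Ico.1 hm).2 hr
    have hb2 : ∀ m ∈ Finset.range (n - r + (i:ℕ) + 1), m < n := by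
      intro m hm; rw [Finset.mem_range] at hm; omega
    obtain ⟨c, d, hc, hd, hcd, hne⟩ := inter_exists hV hW
      ((Finset.Ico (i:ℕ) r).attachFin hb1) ((Finset.range (n - r + (i:ℕ) + 1)).attachFin hb2)
      (by rw [Finset.card_attachFin, Finset.card_attachFin, Nat.card_Ico, Finset.card_range]; omega)
    have hdne : d ≠ 0 := by
      intro h0
      rw [h0, Matrix.mulVec_zero] at hcd
      exact hne hcd
    have hNpos : 0 < ∑ j, ‖d j‖^2 := by
      have hex : ∃ j, d j ≠ 0 := by
        by_contra h
        push_neg at h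
        exact hdne (funext h)
      obtain ⟨j0, hj0⟩ := hex
      exact Finset.sum_pos' (fun j _ => by positivity) ⟨j0, Finset.mem_univ _, pow_pos (norm_pos_iff.2 hj0) 2⟩
    have hMN : (∑ j, ‖c j‖^2) = ∑ j, ‖d j‖^2 := normVW c d hcd
    have hcsupp : ∀ j : Fin n, r ≤ (j:ℕ) → c j = 0 := by
      intro j hj
      refine hc j ?_
      rw [Finset.mem_attachFin, Finset.mem_Ico]
      omega
    have hqA_le : (∑ j, lam j * ‖c j‖^2) ≤ lam i * ∑ j, ‖c j‖^2 := by
      rw [Finset.mul_sum]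
      refine Finset.sum_le_sum fun j _ => ?_
      rcases eq_or_ne (c j) 0 with h0 | h0
      · simp [h0]
      · have hjm : j ∈ (Finset.Ico (i:ℕ) r).attachFin hb1 := by
          by_contra hn
          exact h0 (hc j hn)
        rw [Finset.mem_attachFin, Finset.mem_Ico] at hjm
        have hlam : lam j ≤ lam i := hord i j (Fin.le_def.2 hjm.1) hjm.2
        exact mul_le_mul_of_nonneg_right hlam (by positivity)
    have hup : (star (V *ᵥ c) ⬝ᵥ ((A+E) *ᵥ (V *ᵥ c))).re
        ≤ (1 + k) * lam i * ∑ j, ‖d j‖^2 := by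
      rw [reQV c]
      have h1 : (star (V *ᵥ c) ⬝ᵥ (E *ᵥ (V *ᵥ c))).re ≤ k * ∑ j, lam j * ‖c j‖^2 :=
        le_trans (Complex.re_le_norm _) (Ebound c hcsupp)
      have h2 := hqnn c
      have h3 : (1 + k) * (∑ j, lam j * ‖c j‖^2) ≤ (1 + k) * (lam i * ∑ j, ‖c j‖^2) :=
        mul_le_mul_of_nonneg_left hqA_le (by linarith)
      calc (∑ j, lam j * ‖c j‖^2) + (star (V *ᵥ c) ⬝ᵥ (E *ᵥ (V *ᵥ c))).re
          ≤ (1 + k) * (∑ j, lam j * ‖c j‖^2) := by linarith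
        _ ≤ (1 + k) * (lam i * ∑ j, ‖c j‖^2) := h3
        _ = (1 + k) * lam i * ∑ j, ‖d j‖^2 := by rw [hMN]; ring
    have hlow : mu ⟨n - r + (i:ℕ), by omega⟩ * ∑ j, ‖d j‖^2
        ≤ (star (W *ᵥ d) ⬝ᵥ ((A+E) *ᵥ (W *ᵥ d))).re := by
      rw [reQW d, Finset.mul_sum]
      refine Finset.sum_le_sum fun j _ => ?_
      rcases eq_or_ne (d j) 0 with h0 | h0
      · simp [h0]
      · have hjm : j ∈ (Finset.range (n - r + (i:ℕ) + 1)).attachFin hb2 := by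
          by_contra hn
          exact h0 (hd j hn)
        rw [Finset.mem_attachFin, Finset.mem_range] at hjm
        have hle : j ≤ (⟨n - r + (i:ℕ), by omega⟩ : Fin n) := Fin.le_def.2 (by simp; omega)
        exact mul_le_mul_of_nonneg_right (hmu hle) (by positivity)
    rw [hcd] at hup
    exact le_of_mul_le_mul_right (le_trans hlow hup) hNpos
  · -- lower bound
    rcases le_or_gt k 1 with hk1 | hk1
    · have hb1 : ∀ m ∈ Finset.range ((i:ℕ) + 1), m < n := by
        intro m hm; rw [Finset.mem_range] at hm; omega
      have hb2 : ∀ m ∈ Finset.Ico (i:ℕ) n, m < n := fun m hm => (Finset.mem_Ico.1 hm).2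
      obtain ⟨c, d, hc, hd, hcd, hne⟩ := inter_exists hV hW
        ((Finset.range ((i:ℕ) + 1)).attachFin hb1) ((Finset.Ico (i:ℕ) n).attachFin hb2)
        (by rw [Finset.card_attachFin, Finset.card_attachFin, Finset.card_range, Nat.card_Ico]; omega)
      have hdne : d ≠ 0 := by
        intro h0
        rw [h0, Matrix.mulVec_zero] at hcd
        exact hne hcd
      have hNpos : 0 < ∑ j, ‖d j‖^2 := by
        have hex : ∃ j, d j ≠ 0 := by
          by_contra h
          push_neg at h
          exact hdne (funext h)
        obtain ⟨j0, hj0⟩ := hex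
        exact Finset.sum_pos' (fun j _ => by positivity) ⟨j0, Finset.mem_univ _, pow_pos (norm_pos_iff.2 hj0) 2⟩
      have hMN : (∑ j, ‖c j‖^2) = ∑ j, ‖d j‖^2 := normVW c d hcd
      have hcsupp : ∀ j : Fin n, r ≤ (j:ℕ) → c j = 0 := by
        intro j hj
        refine hc j ?_
        rw [Finset.mem_attachFin, Finset.mem_range]
        omega
      have hqA_ge : lam i * (∑ j, ‖c j‖^2) ≤ ∑ j, lam j * ‖c j‖^2 := by
        rw [Finset.mul_sum]
        refine Finset.sum_le_sum fun j _ => ?_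
        rcases eq_or_ne (c j) 0 with h0 | h0
        · simp [h0]
        · have hjm : j ∈ (Finset.range ((i:ℕ) + 1)).attachFin hb1 := by
            by_contra hn
            exact h0 (hc j hn)
          rw [Finset.mem_attachFin, Finset.mem_range] at hjm
          have hlam : lam i ≤ lam j := hord j i (Fin.le_def.2 (by omega)) hi
          exact mul_le_mul_of_nonneg_right hlam (by positivity)
      have hlo : (1 - k) * lam i * ∑ j, ‖d j‖^2
          ≤ (star (V *ᵥ c) ⬝ᵥ ((A+E) *ᵥ (V *ᵥ c))).re := by
        rw [reQV c]
        have h1 : -(k * ∑ j, lam j * ‖c j‖^2) ≤ (star (V *ᵥ c) ⬝ᵥ (E *ᵥ (V *ᵥ c))).re := by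
          have := (abs_le.1 (Complex.abs_re_le_norm (star (V *ᵥ c) ⬝ᵥ (E *ᵥ (V *ᵥ c))))).1
          have h2 := Ebound c hcsupp
          linarith
        have h3 : (1 - k) * (lam i * ∑ j, ‖c j‖^2) ≤ (1 - k) * ∑ j, lam j * ‖c j‖^2 :=
          mul_le_mul_of_nonneg_left hqA_ge (by linarith)
        calc (1 - k) * lam i * ∑ j, ‖d j‖^2 = (1 - k) * (lam i * ∑ j, ‖c j‖^2) := by
              rw [hMN]; ring
          _ ≤ (1 - k) * ∑ j, lam j * ‖c j‖^2 := h3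
          _ ≤ (∑ j, lam j * ‖c j‖^2) + (star (V *ᵥ c) ⬝ᵥ (E *ᵥ (V *ᵥ c))).re := by linarith
      have hhi : (star (W *ᵥ d) ⬝ᵥ ((A+E) *ᵥ (W *ᵥ d))).re ≤ mu i * ∑ j, ‖d j‖^2 := by
        rw [reQW d, Finset.mul_sum]
        refine Finset.sum_le_sum fun j _ => ?_
        rcases eq_or_ne (d j) 0 with h0 | h0
        · simp [h0]
        · have hjm : j ∈ (Finset.Ico (i:ℕ) n).attachFin hb2 := by
            by_contra hn
            exact h0 (hd j hn)
          rw [Finset.mem_attachFin, Finset.mem_Ico] at hjm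
          have hle : i ≤ j := Fin.le_def.2 hjm.1
          exact mul_le_mul_of_nonneg_right (hmu hle) (by positivity)
      rw [hcd] at hlo
      have hfin := le_trans hlo hhi
      have : (1 - k) * lam i ≤ mu i := le_of_mul_le_mul_right hfin hNpos
      exact this
    · -- k > 1
      have hx := hAE.dotProduct_mulVec_nonneg (W *ᵥ Pi.single i 1)
      have hre : 0 ≤ (star (W *ᵥ Pi.single i 1) ⬝ᵥ ((A+E) *ᵥ (W *ᵥ Pi.single i 1))).re :=
        (Complex.le_def.1 hx).1
      rw [reQW] at hre
      have hsum : (∑ j, mu j * ‖(Pi.single i 1 : Fin n → ℂ) j‖^2) = mu i := by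
        rw [Finset.sum_eq_single i]
        · simp
        · intro j _ hj
          simp [Pi.single_apply, hj]
        · intro h
          exact absurd (Finset.mem_univ i) h
      rw [hsum] at hre
      have : (1 - k) * lam i ≤ 0 := mul_nonpos_of_nonpos_of_nonneg (by linarith) (lamnn i)
      exact le_trans this hre
end

section
/- Let A be normal of rank r ≤ n with polar factor P and let V_r be an n×r matrix whose columns are orthonormal eigenvectors of A spanning its range. Let Ã be normal with polar factor P̃ = DPD* and Ẽ = DED*, where D is invertible, E is Hermitian, and D*D commutes with V_rV_r*. Then ‖(A^{1/2})⁺ E (A^{1/2})⁺‖₂ = ‖(Ã^{1/2})⁺ Ẽ (Ã^{1/2})⁺‖₂. -/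
open Matrix
open scoped ComplexOrder

open scoped Matrix.Norms.L2Operator

noncomputable instance (n : ℕ) : CStarAlgebra (Matrix (Fin n) (Fin n) ℂ) := { }

section Helpers

variable {n : ℕ} {V : Matrix (Fin n) (Fin n) ℂ}

lemma specNorm_eq_norm (A : Matrix (Fin n) (Fin n) ℂ) : specNorm A = ‖A‖ := rfl

lemma mp_unique_s8 {A B C : Matrix (Fin n) (Fin n) ℂ} (hB : IsMP A B) (hC : IsMP A C) : B = C := by
  obtain ⟨b1, b2, b3, b4⟩ := hB
  obtain ⟨c1, c2, c3, c4⟩ := hC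
  have hAB : A * B = A * C := by
    calc A * B = (A * B)ᴴ := b3.symm
    _ = Bᴴ * Aᴴ := conjTranspose_mul _ _
    _ = Bᴴ * (A * C * A)ᴴ := by rw [c1]
    _ = Bᴴ * (Aᴴ * (A * C)ᴴ) := by rw [conjTranspose_mul (A * C) A]
    _ = (Bᴴ * Aᴴ) * (A * C)ᴴ := (mul_assoc _ _ _).symm
    _ = (A * B)ᴴ * (A * C)ᴴ := by rw [← conjTranspose_mul A B]
    _ = (A * B) * (A * C) := by rw [b3, c3]
    _ = ((A * B) * A) * C := (mul_assoc _ _ _).symm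
    _ = A * C := by rw [b1]
  have hBA : B * A = C * A := by
    calc B * A = (B * A)ᴴ := b4.symm
    _ = Aᴴ * Bᴴ := conjTranspose_mul _ _
    _ = (A * (C * A))ᴴ * Bᴴ := by rw [← mul_assoc, c1]
    _ = ((C * A)ᴴ * Aᴴ) * Bᴴ := by rw [conjTranspose_mul A (C * A)]
    _ = (C * A)ᴴ * (Aᴴ * Bᴴ) := mul_assoc _ _ _
    _ = (C * A)ᴴ * (B * A)ᴴ := by rw [← conjTranspose_mul B A]
    _ = (C * A) * (B * A) := by rw [c4, b4]
    _ = C * ((A * B) * A) := by rw [mul_assoc, mul_assoc]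
    _ = C * A := by rw [b1]
  calc B = B * A * B := b2.symm
  _ = C * A * B := by rw [hBA]
  _ = C * (A * B) := mul_assoc _ _ _
  _ = C * (A * C) := by rw [hAB]
  _ = C * A * C := (mul_assoc _ _ _).symm
  _ = C := c2

lemma uconj_mul (hV : V ∈ Matrix.unitaryGroup (Fin n) ℂ) (X Y : Matrix (Fin n) (Fin n) ℂ) :
    (V * X * Vᴴ) * (V * Y * Vᴴ) = V * (X * Y) * Vᴴ := by
  have h : Vᴴ * V = 1 := by
    rw [← Matrix.star_eq_conjTranspose]; exact mem_unitaryGroup_iff'.mp hV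
  simp only [Matrix.mul_assoc]
  rw [← Matrix.mul_assoc Vᴴ V, h, Matrix.one_mul]

lemma uconj_ct (X : Matrix (Fin n) (Fin n) ℂ) : (V * X * Vᴴ)ᴴ = V * Xᴴ * Vᴴ := by
  simp [Matrix.conjTranspose_mul, Matrix.mul_assoc]

lemma ddiag_conj (hV : V ∈ Matrix.unitaryGroup (Fin n) ℂ) (a b : Fin n → ℂ) :
    (V * diagonal a * Vᴴ) * (V * diagonal b * Vᴴ) = V * diagonal (fun i => a i * b i) * Vᴴ := by
  rw [uconj_mul hV, diagonal_mul_diagonal]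

lemma mp_diag_conj (hV : V ∈ Matrix.unitaryGroup (Fin n) ℂ) (f : Fin n → ℂ) :
    IsMP (V * diagonal f * Vᴴ) (V * diagonal (fun i => (f i)⁻¹) * Vᴴ) := by
  refine ⟨?_, ?_, ?_, ?_⟩
  · rw [ddiag_conj hV, ddiag_conj hV]
    have : (fun i => f i * (f i)⁻¹ * f i) = f := by
      funext i; by_cases h : f i = 0 <;> simp [h]
    rw [this]
  · rw [ddiag_conj hV, ddiag_conj hV]
    have : (fun i => (f i)⁻¹ * f i * (f i)⁻¹) = fun i => (f i)⁻¹ := by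
      funext i; by_cases h : f i = 0 <;> simp [h]
    rw [this]
  · rw [ddiag_conj hV, uconj_ct, diagonal_conjTranspose]
    have : (star fun i => f i * (f i)⁻¹) = fun i => f i * (f i)⁻¹ := by
      funext i
      by_cases h : f i = 0 <;> simp [Pi.star_apply, h, mul_inv_cancel₀]
    rw [this]
  · rw [ddiag_conj hV, uconj_ct, diagonal_conjTranspose]
    have : (star fun i => (f i)⁻¹ * f i) = fun i => (f i)⁻¹ * f i := by
      funext i
      by_cases h : f i = 0 <;> simp [Pi.star_apply, h, inv_mul_cancel₀]
    rw [this]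

lemma abs_half_pow (z : ℂ) : ‖z ^ ((1:ℂ)/2)‖ = Real.sqrt (‖z‖) := by
  by_cases h : z = 0
  · rw [h, Complex.zero_cpow (by norm_num : ((1:ℂ)/2) ≠ 0)]
    simp
  · rw [Complex.norm_cpow_of_ne_zero h]
    have h1 : ((1:ℂ)/2).re = 1/2 := by norm_num [Complex.div_re]
    have h2 : ((1:ℂ)/2).im = 0 := by norm_num [Complex.div_im]
    rw [h1, h2, mul_zero, Real.exp_zero, div_one, Real.sqrt_eq_rpow]

lemma spectralRadius_mul_comm (a b : Matrix (Fin n) (Fin n) ℂ) :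
    spectralRadius ℂ (a * b) = spectralRadius ℂ (b * a) := by
  have key : ∀ S : Set ℂ, (⨆ k ∈ S, (‖k‖₊ : ENNReal)) = ⨆ k ∈ S \ {0}, (‖k‖₊ : ENNReal) := by
    intro S
    apply le_antisymm
    · refine iSup₂_le fun k hk => ?_
      by_cases h : k = 0
      · simp [h]
      · exact le_iSup₂ (f := fun k (_ : k ∈ S \ {0}) => (‖k‖₊ : ENNReal)) k ⟨hk, h⟩
    · exact iSup₂_le fun k hk =>
        le_iSup₂ (f := fun k (_ : k ∈ S) => (‖k‖₊ : ENNReal)) k hk.1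
  unfold spectralRadius
  rw [key (spectrum ℂ (a*b)), key (spectrum ℂ (b*a)), spectrum.nonzero_mul_comm]

lemma strip_norm (hV : V ∈ Matrix.unitaryGroup (Fin n) ℂ) (f : Fin n → ℂ)
    (X : Matrix (Fin n) (Fin n) ℂ) :
    ‖(V * diagonal (fun i => (f i ^ ((1:ℂ)/2))⁻¹) * Vᴴ) * X *
      (V * diagonal (fun i => (f i ^ ((1:ℂ)/2))⁻¹) * Vᴴ)‖ =
    ‖(V * diagonal (fun i => (((Real.sqrt (‖f i‖))⁻¹ : ℝ) : ℂ)) * Vᴴ) * X *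
      (V * diagonal (fun i => (((Real.sqrt (‖f i‖))⁻¹ : ℝ) : ℂ)) * Vᴴ)‖ := by
  set u : Fin n → ℂ :=
    fun i => if f i = 0 then 1 else (f i ^ ((1:ℂ)/2))⁻¹ * (Real.sqrt (‖f i‖) : ℂ)
    with hu_def
  set m : Fin n → ℂ := fun i => (((Real.sqrt (‖f i‖))⁻¹ : ℝ) : ℂ) with hm_def
  have habs_u : ∀ i, ‖u i‖ = 1 := by
    intro i
    by_cases h : f i = 0
    · simp [hu_def, h]
    · have hpos : 0 < ‖f i‖ := by
        simpa [norm_pos_iff] using h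
      have hs : Real.sqrt (‖f i‖) ≠ 0 := by
        positivity
      simp only [hu_def, h, if_false]
      rw [norm_mul, norm_inv, abs_half_pow, Complex.norm_real, Real.norm_eq_abs,
        abs_of_nonneg (Real.sqrt_nonneg _), inv_mul_cancel₀ hs]
  have hfact : ∀ i, (f i ^ ((1:ℂ)/2))⁻¹ = u i * m i := by
    intro i
    by_cases h : f i = 0
    · simp [hu_def, hm_def, h, Complex.zero_cpow (by norm_num : ((1:ℂ)/2) ≠ 0)]
    · have hpos : 0 < ‖f i‖ := by
        simpa [norm_pos_iff] using h
      have hs : (Real.sqrt (‖f i‖) : ℂ) ≠ 0 := by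
        simp only [ne_eq, Complex.ofReal_eq_zero]
        positivity
      simp only [hu_def, hm_def, h, if_false, Complex.ofReal_inv]
      rw [mul_assoc, mul_inv_cancel₀ hs, mul_one]
  have huu : ∀ i, (starRingEnd ℂ) (u i) * u i = 1 := by
    intro i
    rw [mul_comm, Complex.mul_conj, Complex.normSq_eq_norm_sq, habs_u i]
    norm_num
  set U : Matrix (Fin n) (Fin n) ℂ := V * diagonal u * Vᴴ with hU_def
  have hVV : V * Vᴴ = 1 := by
    rw [← Matrix.star_eq_conjTranspose]; exact mem_unitaryGroup_iff.mp hV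
  have hUstar : star U = V * diagonal (star u) * Vᴴ := by
    rw [hU_def, Matrix.star_eq_conjTranspose, uconj_ct, diagonal_conjTranspose]
  have hUmem : U ∈ unitary (Matrix (Fin n) (Fin n) ℂ) := by
    constructor
    · rw [hUstar, hU_def, ddiag_conj hV]
      have : (fun i => star u i * u i) = fun _ => (1:ℂ) := by
        funext i; exact huu i
      rw [this, diagonal_one, Matrix.mul_one, hVV]
    · rw [hUstar, hU_def, ddiag_conj hV]
      have : (fun i => u i * star u i) = fun _ => (1:ℂ) := by
        funext i; rw [mul_comm]; exact huu i
      rw [this, diagonal_one, Matrix.mul_one, hVV]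
  set M : Matrix (Fin n) (Fin n) ℂ := V * diagonal m * Vᴴ with hM_def
  have hB1 : V * diagonal (fun i => (f i ^ ((1:ℂ)/2))⁻¹) * Vᴴ = U * M := by
    rw [hU_def, hM_def, ddiag_conj hV]
    have hv : (fun i => (f i ^ ((1:ℂ)/2))⁻¹) = fun i => u i * m i := funext hfact
    rw [hv]
  have hB2 : V * diagonal (fun i => (f i ^ ((1:ℂ)/2))⁻¹) * Vᴴ = M * U := by
    rw [hU_def, hM_def, ddiag_conj hV]
    have hv : (fun i => (f i ^ ((1:ℂ)/2))⁻¹) = fun i => m i * u i := by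
      funext i; rw [hfact i, mul_comm]
    rw [hv]
  calc ‖(V * diagonal (fun i => (f i ^ ((1:ℂ)/2))⁻¹) * Vᴴ) * X *
      (V * diagonal (fun i => (f i ^ ((1:ℂ)/2))⁻¹) * Vᴴ)‖
      = ‖U * (M * X * M * U)‖ := by
        nth_rewrite 2 [hB2]
        rw [hB1]
        congr 1
        simp only [Matrix.mul_assoc]
    _ = ‖M * X * M * U‖ := CStarRing.norm_mem_unitary_mul _ hUmem
    _ = ‖M * X * M‖ := CStarRing.norm_mul_mem_unitary _ hUmem

end Helpers

/-- Theorem 3.1.  `A` normal of rank `r ≤ n` with spectral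
decomposition `A = V (diag d) Vᴴ` (nonzero eigenvalues first), polar factor
`P = V |diag d| Vᴴ`, and `V_rV_rᴴ = V (diag 1_{i<r}) Vᴴ` the orthogonal projection
onto the range.  `Ã` is normal with polar factor `P̃ = D P Dᴴ`, `Ẽ = D E Dᴴ`, where
`D` is invertible, `E` is Hermitian, and `DᴴD` commutes with `V_rV_rᴴ`.  Then
`‖(A^{1/2})⁺ E (A^{1/2})⁺‖₂ = ‖(Ã^{1/2})⁺ Ẽ (Ã^{1/2})⁺‖₂`. -/
theorem stmt8 (n r : ℕ) (hr : r ≤ n)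
    (A At E D Dinv P V W B Bt : Matrix (Fin n) (Fin n) ℂ)
    (d e : Fin n → ℂ)
    (hE : E.IsHermitian)
    (hV : V ∈ Matrix.unitaryGroup (Fin n) ℂ)
    (hAeig : A = V * Matrix.diagonal d * Vᴴ)
    (hdnz : ∀ i : Fin n, (i : ℕ) < r → d i ≠ 0)
    (hdz : ∀ i : Fin n, r ≤ (i : ℕ) → d i = 0)
    (hP : P = V * Matrix.diagonal (fun i => ((‖d i‖ : ℝ) : ℂ)) * Vᴴ)
    (hD : D * Dinv = 1) (hD' : Dinv * D = 1)
    (hcomm :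
      (Dᴴ * D) * (V * Matrix.diagonal (fun i : Fin n => if (i : ℕ) < r then (1 : ℂ) else 0) * Vᴴ) =
      (V * Matrix.diagonal (fun i : Fin n => if (i : ℕ) < r then (1 : ℂ) else 0) * Vᴴ) * (Dᴴ * D))
    (hAtnormal : Atᴴ * At = At * Atᴴ)
    (hW : W ∈ Matrix.unitaryGroup (Fin n) ℂ)
    (hAteig : At = W * Matrix.diagonal e * Wᴴ)
    (hPt : W * Matrix.diagonal (fun i => ((‖e i‖ : ℝ) : ℂ)) * Wᴴ = D * P * Dᴴ)
    (hB : IsMP (V * Matrix.diagonal (fun i => d i ^ ((1 : ℂ)/2)) * Vᴴ) B)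
    (hBt : IsMP (W * Matrix.diagonal (fun i => e i ^ ((1 : ℂ)/2)) * Wᴴ) Bt) :
    specNorm (B * E * B) = specNorm (Bt * (D * E * Dᴴ) * Bt) := by
  classical
  -- explicit formulas for the pseudoinverses
  have hBeq : B = V * diagonal (fun i => (d i ^ ((1:ℂ)/2))⁻¹) * Vᴴ :=
    mp_unique_s8 hB (mp_diag_conj hV _)
  have hBteq : Bt = W * diagonal (fun i => (e i ^ ((1:ℂ)/2))⁻¹) * Wᴴ :=
    mp_unique_s8 hBt (mp_diag_conj hW _)
  -- the positive parts
  set M : Matrix (Fin n) (Fin n) ℂ :=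
    V * diagonal (fun i => (((Real.sqrt (‖d i‖))⁻¹ : ℝ) : ℂ)) * Vᴴ with hM_def
  set Mt : Matrix (Fin n) (Fin n) ℂ :=
    W * diagonal (fun i => (((Real.sqrt (‖e i‖))⁻¹ : ℝ) : ℂ)) * Wᴴ with hMt_def
  have hs1 : specNorm (B * E * B) = ‖M * E * M‖ := by
    rw [specNorm_eq_norm, hBeq, hM_def]
    exact strip_norm hV d E
  have hs2 : specNorm (Bt * (D * E * Dᴴ) * Bt) = ‖Mt * (D * E * Dᴴ) * Mt‖ := by
    rw [specNorm_eq_norm, hBteq, hMt_def]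
    exact strip_norm hW e (D * E * Dᴴ)
  -- Hermitian-ness
  have hMH : Mᴴ = M := by
    rw [hM_def, uconj_ct, diagonal_conjTranspose]
    have : (star fun i => (((Real.sqrt (‖d i‖))⁻¹ : ℝ) : ℂ)) =
        fun i => (((Real.sqrt (‖d i‖))⁻¹ : ℝ) : ℂ) := by
      funext i; simp [Pi.star_apply, Complex.conj_ofReal]
    rw [this]
  have hMtH : Mtᴴ = Mt := by
    rw [hMt_def, uconj_ct, diagonal_conjTranspose]
    have : (star fun i => (((Real.sqrt (‖e i‖))⁻¹ : ℝ) : ℂ)) =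
        fun i => (((Real.sqrt (‖e i‖))⁻¹ : ℝ) : ℂ) := by
      funext i; simp [Pi.star_apply, Complex.conj_ofReal]
    rw [this]
  have hEtH : (D * E * Dᴴ)ᴴ = D * E * Dᴴ := by
    rw [conjTranspose_mul, conjTranspose_mul, conjTranspose_conjTranspose, hE.eq]
    simp only [Matrix.mul_assoc]
  have hsa1 : IsSelfAdjoint (M * E * M) := by
    show star (M * E * M) = M * E * M
    rw [Matrix.star_eq_conjTranspose, conjTranspose_mul (M * E) M, conjTranspose_mul M E,
      hMH, hE.eq]
    simp only [Matrix.mul_assoc]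
  have hsa2 : IsSelfAdjoint (Mt * (D * E * Dᴴ) * Mt) := by
    show star (Mt * (D * E * Dᴴ) * Mt) = Mt * (D * E * Dᴴ) * Mt
    rw [Matrix.star_eq_conjTranspose, conjTranspose_mul (Mt * (D * E * Dᴴ)) Mt,
      conjTranspose_mul Mt (D * E * Dᴴ), hMtH, hEtH]
    simp only [Matrix.mul_assoc]
  -- squares of the positive parts
  have half_sq : ∀ z : ℂ,
      ((((Real.sqrt (‖z‖))⁻¹ : ℝ) : ℂ)) * ((((Real.sqrt (‖z‖))⁻¹ : ℝ) : ℂ)) =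
      ((‖z‖ : ℂ))⁻¹ := by
    intro z
    rw [← Complex.ofReal_mul, ← mul_inv, Real.mul_self_sqrt (norm_nonneg _),
      Complex.ofReal_inv]
  have hMM : M * M = V * diagonal (fun i => ((‖d i‖ : ℂ))⁻¹) * Vᴴ := by
    rw [hM_def, ddiag_conj hV]
    have : (fun i => ((((Real.sqrt (‖d i‖))⁻¹ : ℝ) : ℂ)) *
        ((((Real.sqrt (‖d i‖))⁻¹ : ℝ) : ℂ))) =
        fun i => ((‖d i‖ : ℂ))⁻¹ := by
      funext i; exact half_sq (d i)
    rw [this]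
  have hMtMt : Mt * Mt = W * diagonal (fun i => ((‖e i‖ : ℂ))⁻¹) * Wᴴ := by
    rw [hMt_def, ddiag_conj hW]
    have : (fun i => ((((Real.sqrt (‖e i‖))⁻¹ : ℝ) : ℂ)) *
        ((((Real.sqrt (‖e i‖))⁻¹ : ℝ) : ℂ))) =
        fun i => ((‖e i‖ : ℂ))⁻¹ := by
      funext i; exact half_sq (e i)
    rw [this]
  -- the projection Π and the pseudoinverse of P
  set Pi0 : Matrix (Fin n) (Fin n) ℂ :=
    V * diagonal (fun i : Fin n => if (i : ℕ) < r then (1 : ℂ) else 0) * Vᴴ with hPi0_def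
  set Pinv : Matrix (Fin n) (Fin n) ℂ :=
    V * diagonal (fun i => ((‖d i‖ : ℂ))⁻¹) * Vᴴ with hPinv_def
  have habs_nz : ∀ i : Fin n, (i : ℕ) < r → ((‖d i‖ : ℂ)) ≠ 0 := by
    intro i hi
    simpa [Complex.ofReal_eq_zero, norm_ne_zero_iff] using hdnz i hi
  have habs_z : ∀ i : Fin n, r ≤ (i : ℕ) → ((‖d i‖ : ℂ)) = 0 := by
    intro i hi
    simp [hdz i hi]
  have hPPinv : P * Pinv = Pi0 := by
    rw [hP, hPinv_def, hPi0_def, ddiag_conj hV]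
    have : (fun i => ((‖d i‖ : ℂ)) * ((‖d i‖ : ℂ))⁻¹) =
        fun i : Fin n => if (i : ℕ) < r then (1 : ℂ) else 0 := by
      funext i
      by_cases hi : (i : ℕ) < r
      · simp [hi, mul_inv_cancel₀ (habs_nz i hi)]
      · simp [hi, habs_z i (le_of_not_gt hi)]
    rw [this]
  have hPinvP : Pinv * P = Pi0 := by
    rw [hP, hPinv_def, hPi0_def, ddiag_conj hV]
    have : (fun i => ((‖d i‖ : ℂ))⁻¹ * ((‖d i‖ : ℂ))) =
        fun i : Fin n => if (i : ℕ) < r then (1 : ℂ) else 0 := by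
      funext i
      by_cases hi : (i : ℕ) < r
      · simp [hi, inv_mul_cancel₀ (habs_nz i hi)]
      · simp [hi, habs_z i (le_of_not_gt hi)]
    rw [this]
  have hPPi : P * Pi0 = P := by
    rw [hP, hPi0_def, ddiag_conj hV]
    have : (fun i => ((‖d i‖ : ℂ)) * (if (i : ℕ) < r then (1 : ℂ) else 0)) =
        fun i => ((‖d i‖ : ℂ)) := by
      funext i
      by_cases hi : (i : ℕ) < r
      · simp [hi]
      · simp [hi, habs_z i (le_of_not_gt hi)]
    rw [this]
  have hPinvPi : Pinv * Pi0 = Pinv := by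
    rw [hPinv_def, hPi0_def, ddiag_conj hV]
    have : (fun i => ((‖d i‖ : ℂ))⁻¹ * (if (i : ℕ) < r then (1 : ℂ) else 0)) =
        fun i => ((‖d i‖ : ℂ))⁻¹ := by
      funext i
      by_cases hi : (i : ℕ) < r
      · simp [hi]
      · simp [hi, habs_z i (le_of_not_gt hi)]
    rw [this]
  have hPiH : Pi0ᴴ = Pi0 := by
    rw [hPi0_def, uconj_ct, diagonal_conjTranspose]
    have : (star fun i : Fin n => if (i : ℕ) < r then (1 : ℂ) else 0) =
        fun i : Fin n => if (i : ℕ) < r then (1 : ℂ) else 0 := by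
      funext i; by_cases hi : (i : ℕ) < r <;> simp [Pi.star_apply, hi]
    rw [this]
  -- cancellation helpers
  have hDD : Dᴴ * Dinvᴴ = 1 := by rw [← conjTranspose_mul, hD', conjTranspose_one]
  have hDD' : Dinvᴴ * Dᴴ = 1 := by rw [← conjTranspose_mul, hD, conjTranspose_one]
  have cD1 : ∀ Z : Matrix (Fin n) (Fin n) ℂ, Dᴴ * (Dinvᴴ * Z) = Z := by
    intro Z; rw [← mul_assoc, hDD, one_mul]
  have cD2 : ∀ Z : Matrix (Fin n) (Fin n) ℂ, Dinvᴴ * (Dᴴ * Z) = Z := by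
    intro Z; rw [← mul_assoc, hDD', one_mul]
  have cD3 : ∀ Z : Matrix (Fin n) (Fin n) ℂ, Dinv * (D * Z) = Z := by
    intro Z; rw [← mul_assoc, hD', one_mul]
  have cP1 : ∀ Z : Matrix (Fin n) (Fin n) ℂ, P * (Pinv * Z) = Pi0 * Z := by
    intro Z; rw [← mul_assoc, hPPinv]
  have cP2 : ∀ Z : Matrix (Fin n) (Fin n) ℂ, Pinv * (P * Z) = Pi0 * Z := by
    intro Z; rw [← mul_assoc, hPinvP]
  have cP3 : ∀ Z : Matrix (Fin n) (Fin n) ℂ, P * (Pi0 * Z) = P * Z := by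
    intro Z; rw [← mul_assoc, hPPi]
  have cP4 : ∀ Z : Matrix (Fin n) (Fin n) ℂ, Pinv * (Pi0 * Z) = Pinv * Z := by
    intro Z; rw [← mul_assoc, hPinvPi]
  -- the key commutation identity
  have hKey : D * (Pi0 * Dinv) = Dinvᴴ * (Pi0 * Dᴴ) := by
    have h' : Dᴴ * (D * (Pi0 * Dinv)) = Pi0 * Dᴴ := by
      have h2 := congrArg (· * Dinv) hcomm
      simp only [Matrix.mul_assoc] at h2
      rw [h2, hD, Matrix.mul_one]
    conv_lhs => rw [← cD2 (D * (Pi0 * Dinv))]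
    rw [h']
  -- the two Moore–Penrose inverses of D * P * Dᴴ
  have mpQ : IsMP (D * P * Dᴴ) (W * diagonal (fun i => ((‖e i‖ : ℂ))⁻¹) * Wᴴ) := by
    rw [← hPt]
    exact mp_diag_conj hW (fun i => (‖e i‖ : ℂ))
  have mpY : IsMP (D * P * Dᴴ) (Dinvᴴ * Pinv * Dinv) := by
    have hXY : (D * P * Dᴴ) * (Dinvᴴ * Pinv * Dinv) = D * (Pi0 * Dinv) := by
      simp only [Matrix.mul_assoc]
      rw [cD1, cP1]
    have hYX : (Dinvᴴ * Pinv * Dinv) * (D * P * Dᴴ) = Dinvᴴ * (Pi0 * Dᴴ) := by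
      simp only [Matrix.mul_assoc]
      rw [cD3, cP2]
    refine ⟨?_, ?_, ?_, ?_⟩
    · simp only [Matrix.mul_assoc]
      rw [cD3, cP2, cD1, cP3]
    · simp only [Matrix.mul_assoc]
      rw [cD1, cP1, cD3, cP4]
    · rw [hXY, conjTranspose_mul, conjTranspose_mul, hPiH, hKey]
      simp only [conjTranspose_conjTranspose, Matrix.mul_assoc]
    · rw [hYX, conjTranspose_mul, conjTranspose_mul, hPiH, ← hKey]
      simp only [conjTranspose_conjTranspose, Matrix.mul_assoc]
  have hQeq : W * diagonal (fun i => ((‖e i‖ : ℂ))⁻¹) * Wᴴ =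
      Dinvᴴ * Pinv * Dinv := mp_unique_s8 mpQ mpY
  -- spectral radius chain
  have c1 : spectralRadius ℂ (M * E * M) = spectralRadius ℂ (M * M * E) := by
    rw [spectralRadius_mul_comm (M * E) M, ← mul_assoc]
  have c2 : spectralRadius ℂ (Mt * (D * E * Dᴴ) * Mt) =
      spectralRadius ℂ (Mt * Mt * (D * E * Dᴴ)) := by
    rw [spectralRadius_mul_comm (Mt * (D * E * Dᴴ)) Mt, ← mul_assoc]
  have c3 : spectralRadius ℂ (Mt * Mt * (D * E * Dᴴ)) = spectralRadius ℂ (M * M * E) := by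
    rw [hMtMt, hQeq, hMM]
    have e1 : (Dinvᴴ * Pinv * Dinv) * (D * E * Dᴴ) = Dinvᴴ * (Pinv * (E * Dᴴ)) := by
      simp only [Matrix.mul_assoc]
      rw [cD3]
    have e2 : (Pinv * (E * Dᴴ)) * Dinvᴴ = Pinv * E := by
      simp only [Matrix.mul_assoc]
      rw [hDD, Matrix.mul_one]
    rw [e1, spectralRadius_mul_comm, e2]
  have main : (‖M * E * M‖₊ : ENNReal) = (‖Mt * (D * E * Dᴴ) * Mt‖₊ : ENNReal) := by
    calc (‖M * E * M‖₊ : ENNReal) = spectralRadius ℂ (M * E * M) :=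
        hsa1.spectralRadius_eq_nnnorm.symm
    _ = spectralRadius ℂ (M * M * E) := c1
    _ = spectralRadius ℂ (Mt * Mt * (D * E * Dᴴ)) := c3.symm
    _ = spectralRadius ℂ (Mt * (D * E * Dᴴ) * Mt) := c2.symm
    _ = (‖Mt * (D * E * Dᴴ) * Mt‖₊ : ENNReal) := hsa2.spectralRadius_eq_nnnorm
  have main' : ‖M * E * M‖ = ‖Mt * (D * E * Dᴴ) * Mt‖ := by
    have h2 := ENNReal.coe_inj.mp main
    calc ‖M * E * M‖ = (‖M * E * M‖₊ : ℝ) := (coe_nnnorm _).symm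
    _ = (‖Mt * (D * E * Dᴴ) * Mt‖₊ : ℝ) := by exact_mod_cast h2
    _ = ‖Mt * (D * E * Dᴴ) * Mt‖ := coe_nnnorm _
  rw [hs1, hs2, main']
end
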